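/- arXiv:0808.3330 — 2 statements merged into one kernel-verified Lean document; each statement's English description precedes it below -/
import Mathlib

section
/- Let (A,·) be a finite-dimensional (nonunital) associative algebra over a field F and r ∈ A⊗A. Define Δ : A → A⊗A by Δ(x) = (id ⊗ L(x) − R(x) ⊗ id)r. Then the dual map Δ* : A*⊗A* → A* defines an associative product on A* if and only if (id ⊗ id ⊗ L(x) − R(x) ⊗ id ⊗ id)(r₁₂r₁₃ + r₁₃r₂₃ − r₂₃r₁₂) = 0 for all x ∈ A. -/
open TensorProduct LinearMap

section Prelude
variable {F : Type*} [Field F]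

/-- Associativity of a (nonunital) bilinear product. -/
def IsAssocMul {A : Type*} [AddCommGroup A] [Module F A]
    (m : A →ₗ[F] A →ₗ[F] A) : Prop :=
  ∀ x y z, m (m x y) z = m x (m y z)

/-- `(l, r, V)` is a bimodule of the associative algebra `(A, m)`. -/
def IsBimodule {A V : Type*} [AddCommGroup A] [Module F A]
    [AddCommGroup V] [Module F V]
    (m : A →ₗ[F] A →ₗ[F] A) (l r : A →ₗ[F] V →ₗ[F] V) : Prop :=
  (∀ x y v, l (m x y) v = l x (l y v)) ∧
  (∀ x y v, r (m x y) v = r y (r x v)) ∧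
  (∀ x y v, l x (r y v) = r y (l x v))

/-- `(A, B, lA, rA, lB, rB)` is a matched pair of associative algebras. -/
def IsMatchedPair {A B : Type*} [AddCommGroup A] [Module F A]
    [AddCommGroup B] [Module F B]
    (mA : A →ₗ[F] A →ₗ[F] A) (mB : B →ₗ[F] B →ₗ[F] B)
    (lA rA : A →ₗ[F] B →ₗ[F] B) (lB rB : B →ₗ[F] A →ₗ[F] A) : Prop :=
  IsAssocMul mA ∧ IsAssocMul mB ∧ IsBimodule mA lA rA ∧ IsBimodule mB lB rB ∧
  (∀ x a b, lA x (mB a b) = lA (rB a x) b + mB (lA x a) b) ∧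
  (∀ x a b, rA x (mB a b) = rA (lB b x) a + mB a (rA x b)) ∧
  (∀ a x y, lB a (mA x y) = lB (rA x a) y + mA (lB a x) y) ∧
  (∀ a x y, rB a (mA x y) = rB (lA y a) x + mA x (rB a y)) ∧
  (∀ x a b, lA (lB a x) b + mB (rA x a) b - rA (rB b x) a - mB a (lA x b) = 0) ∧
  (∀ a x y, lB (lA x a) y + mA (rB a x) y - rB (rA y a) x - mA x (lB a y) = 0)

/-- Dendriform algebra axioms for a pair of bilinear products `≻ = s`, `≺ = p`. -/
def IsDendriform {A : Type*} [AddCommGroup A] [Module F A]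
    (s p : A →ₗ[F] A →ₗ[F] A) : Prop :=
  (∀ x y z, p (p x y) z = p x (s y z + p y z)) ∧
  (∀ x y z, p (s x y) z = s x (p y z)) ∧
  (∀ x y z, s x (s y z) = s (s x y + p x y) z)

/-- The pairing of `f ⊗ g ∈ A* ⊗ A*` with elements of `A ⊗ A`. -/
noncomputable def pair2 {A : Type*} [AddCommGroup A] [Module F A]
    (f g : Module.Dual F A) : (A ⊗[F] A) →ₗ[F] F :=
  (TensorProduct.lid F F).toLinearMap ∘ₗ TensorProduct.map f g

/-- `t12 m (r ⊗ s)` is `r₁₂ ∙ s₁₃`: on `(x ⊗ y) ⊗ (x' ⊗ y')` it gives `m x x' ⊗ y ⊗ y'`. -/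
noncomputable def t12 {A : Type*} [AddCommGroup A] [Module F A]
    (m : A →ₗ[F] A →ₗ[F] A) :
    ((A ⊗[F] A) ⊗[F] (A ⊗[F] A)) →ₗ[F] A ⊗[F] (A ⊗[F] A) :=
  TensorProduct.map (TensorProduct.lift m) LinearMap.id ∘ₗ
    (TensorProduct.tensorTensorTensorComm F A A A A).toLinearMap

/-- `t13 m (r ⊗ s)` is `r₁₃ ∙ s₂₃`: on `(x ⊗ y) ⊗ (x' ⊗ y')` it gives `x ⊗ x' ⊗ m y y'`. -/
noncomputable def t13 {A : Type*} [AddCommGroup A] [Module F A]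
    (m : A →ₗ[F] A →ₗ[F] A) :
    ((A ⊗[F] A) ⊗[F] (A ⊗[F] A)) →ₗ[F] A ⊗[F] (A ⊗[F] A) :=
  (TensorProduct.assoc F A A A).toLinearMap ∘ₗ
    TensorProduct.map LinearMap.id (TensorProduct.lift m) ∘ₗ
    (TensorProduct.tensorTensorTensorComm F A A A A).toLinearMap

/-- `t23 m (r ⊗ s)` is `r₂₃ ∙ s₁₂`: on `(x ⊗ y) ⊗ (x' ⊗ y')` it gives `x' ⊗ m x y' ⊗ y`. -/
noncomputable def t23 {A : Type*} [AddCommGroup A] [Module F A]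
    (m : A →ₗ[F] A →ₗ[F] A) :
    ((A ⊗[F] A) ⊗[F] (A ⊗[F] A)) →ₗ[F] A ⊗[F] (A ⊗[F] A) :=
  (TensorProduct.leftComm F A A A).toLinearMap ∘ₗ
    TensorProduct.map LinearMap.id (TensorProduct.comm F A A).toLinearMap ∘ₗ
    TensorProduct.map (TensorProduct.lift m) LinearMap.id ∘ₗ
    (TensorProduct.tensorTensorTensorComm F A A A A).toLinearMap ∘ₗ
    TensorProduct.map LinearMap.id (TensorProduct.comm F A A).toLinearMap

/-- `aybE m r = r₁₂r₁₃ + r₁₃r₂₃ − r₂₃r₁₂`, the associative Yang–Baxter expression. -/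
noncomputable def aybE {A : Type*} [AddCommGroup A] [Module F A]
    (m : A →ₗ[F] A →ₗ[F] A) (r : A ⊗[F] A) : A ⊗[F] (A ⊗[F] A) :=
  t12 m (r ⊗ₜ r) + t13 m (r ⊗ₜ r) - t23 m (r ⊗ₜ r)

end Prelude

section Aux

variable {F A : Type*} [Field F] [AddCommGroup A] [Module F A]

@[simp] lemma pair2_tmul (a b : Module.Dual F A) (u v : A) :
    pair2 a b (u ⊗ₜ[F] v) = a u * b v := by
  simp [pair2, smul_eq_mul]

noncomputable def pair3 (a b c : Module.Dual F A) : (A ⊗[F] (A ⊗[F] A)) →ₗ[F] F :=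
  (TensorProduct.lid F F).toLinearMap ∘ₗ TensorProduct.map a (pair2 b c)

@[simp] lemma pair3_tmul (a b c : Module.Dual F A) (u v w : A) :
    pair3 a b c (u ⊗ₜ[F] (v ⊗ₜ[F] w)) = a u * (b v * c w) := by
  simp [pair3, smul_eq_mul]

@[simp] lemma t12_tmul (m : A →ₗ[F] A →ₗ[F] A) (u v u' v' : A) :
    t12 m ((u ⊗ₜ[F] v) ⊗ₜ[F] (u' ⊗ₜ[F] v')) = (m u u') ⊗ₜ[F] (v ⊗ₜ[F] v') := by
  simp [t12]

@[simp] lemma t13_tmul (m : A →ₗ[F] A →ₗ[F] A) (u v u' v' : A) :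
    t13 m ((u ⊗ₜ[F] v) ⊗ₜ[F] (u' ⊗ₜ[F] v')) = u ⊗ₜ[F] (u' ⊗ₜ[F] (m v v')) := by
  simp [t13]

@[simp] lemma t23_tmul (m : A →ₗ[F] A →ₗ[F] A) (u v u' v' : A) :
    t23 m ((u ⊗ₜ[F] v) ⊗ₜ[F] (u' ⊗ₜ[F] v')) = u' ⊗ₜ[F] ((m u v') ⊗ₜ[F] v) := by
  simp [t23]

noncomputable def Dop (m : A →ₗ[F] A →ₗ[F] A) (y : A) : A ⊗[F] A →ₗ[F] A ⊗[F] A :=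
  TensorProduct.map LinearMap.id (m y) - TensorProduct.map (m.flip y) LinearMap.id

@[simp] lemma Dop_tmul (m : A →ₗ[F] A →ₗ[F] A) (y u v : A) :
    Dop m y (u ⊗ₜ[F] v) = u ⊗ₜ[F] (m y v) - (m u y) ⊗ₜ[F] v := by
  simp [Dop]

noncomputable def DopL (m : A →ₗ[F] A →ₗ[F] A) : A →ₗ[F] (A ⊗[F] A →ₗ[F] A ⊗[F] A) where
  toFun := Dop m
  map_add' y y' := by
    simp only [Dop, map_add, TensorProduct.map_add_left, TensorProduct.map_add_right]
    abel
  map_smul' c y := by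
    simp only [Dop, map_smul, TensorProduct.map_smul_left, TensorProduct.map_smul_right,
      RingHom.id_apply, smul_sub]

@[simp] lemma DopL_apply (m : A →ₗ[F] A →ₗ[F] A) (y : A) : DopL m y = Dop m y := rfl

noncomputable def Efun (m : A →ₗ[F] A →ₗ[F] A) (a b : Module.Dual F A) :
    (A ⊗[F] A) →ₗ[F] Module.Dual F A where
  toFun s := pair2 a b ∘ₗ (LinearMap.applyₗ s ∘ₗ DopL m)
  map_add' s t := by ext y; simp
  map_smul' c s := by ext y; simp

@[simp] lemma Efun_apply (m : A →ₗ[F] A →ₗ[F] A) (a b : Module.Dual F A)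
    (s : A ⊗[F] A) (y : A) : Efun m a b s y = pair2 a b (Dop m y s) := rfl

end Aux

section Aux2
variable {F A : Type*} [Field F] [AddCommGroup A] [Module F A]

noncomputable def Mop (m : A →ₗ[F] A →ₗ[F] A) (x : A) :
    A ⊗[F] (A ⊗[F] A) →ₗ[F] A ⊗[F] (A ⊗[F] A) :=
  TensorProduct.map (LinearMap.id : A →ₗ[F] A)
      (TensorProduct.map (LinearMap.id : A →ₗ[F] A) (m x)) -
    TensorProduct.map (m.flip x) (LinearMap.id : (A ⊗[F] A) →ₗ[F] (A ⊗[F] A))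

@[simp] lemma Mop_tmul (m : A →ₗ[F] A →ₗ[F] A) (x u v w : A) :
    Mop m x (u ⊗ₜ[F] (v ⊗ₜ[F] w)) = u ⊗ₜ[F] (v ⊗ₜ[F] (m x w)) - (m u x) ⊗ₜ[F] (v ⊗ₜ[F] w) := by
  simp [Mop]

noncomputable def T1 (m : A →ₗ[F] A →ₗ[F] A) (a b c : Module.Dual F A) (x : A) :
    (A ⊗[F] A) →ₗ[F] (A ⊗[F] A) →ₗ[F] F where
  toFun s := pair2 (Efun m a b s) c ∘ₗ Dop m x
  map_add' s s' := by
    ext u' v'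
    simp only [AlgebraTensorModule.curry_apply, TensorProduct.curry_apply,
      LinearMap.coe_restrictScalars, map_add, LinearMap.add_apply, LinearMap.comp_apply,
      Dop_tmul, map_sub, pair2_tmul, Efun_apply]
    ring
  map_smul' k s := by
    ext u' v'
    simp only [AlgebraTensorModule.curry_apply, TensorProduct.curry_apply,
      LinearMap.coe_restrictScalars, map_smul, LinearMap.smul_apply, RingHom.id_apply,
      LinearMap.comp_apply, Dop_tmul, map_sub, pair2_tmul, Efun_apply, smul_eq_mul]
    ring

@[simp] lemma T1_apply (m : A →ₗ[F] A →ₗ[F] A) (a b c : Module.Dual F A) (x : A)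
    (s t : A ⊗[F] A) : T1 m a b c x s t = pair2 (Efun m a b s) c (Dop m x t) := rfl

noncomputable def T2 (m : A →ₗ[F] A →ₗ[F] A) (a b c : Module.Dual F A) (x : A) :
    (A ⊗[F] A) →ₗ[F] (A ⊗[F] A) →ₗ[F] F where
  toFun s := pair2 a (Efun m b c s) ∘ₗ Dop m x
  map_add' s s' := by
    ext u' v'
    simp only [AlgebraTensorModule.curry_apply, TensorProduct.curry_apply,
      LinearMap.coe_restrictScalars, map_add, LinearMap.add_apply, LinearMap.comp_apply,
      Dop_tmul, map_sub, pair2_tmul, Efun_apply]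
    ring
  map_smul' k s := by
    ext u' v'
    simp only [AlgebraTensorModule.curry_apply, TensorProduct.curry_apply,
      LinearMap.coe_restrictScalars, map_smul, LinearMap.smul_apply, RingHom.id_apply,
      LinearMap.comp_apply, Dop_tmul, map_sub, pair2_tmul, Efun_apply, smul_eq_mul]
    ring

@[simp] lemma T2_apply (m : A →ₗ[F] A →ₗ[F] A) (a b c : Module.Dual F A) (x : A)
    (s t : A ⊗[F] A) : T2 m a b c x s t = pair2 a (Efun m b c s) (Dop m x t) := rfl

noncomputable def T3 (m : A →ₗ[F] A →ₗ[F] A) (a b c : Module.Dual F A) (x : A) :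
    (A ⊗[F] A) →ₗ[F] (A ⊗[F] A) →ₗ[F] F :=
  LinearMap.compr₂ (TensorProduct.mk F (A ⊗[F] A) (A ⊗[F] A))
    (pair3 a b c ∘ₗ Mop m x ∘ₗ (t12 m + t13 m - t23 m))

@[simp] lemma T3_apply (m : A →ₗ[F] A →ₗ[F] A) (a b c : Module.Dual F A) (x : A)
    (s t : A ⊗[F] A) :
    T3 m a b c x s t =
      pair3 a b c (Mop m x (t12 m (s ⊗ₜ t) + t13 m (s ⊗ₜ t) - t23 m (s ⊗ₜ t))) := rfl

noncomputable def Phi (m : A →ₗ[F] A →ₗ[F] A) (a b c : Module.Dual F A) (x : A) :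
    (A ⊗[F] A) →ₗ[F] (A ⊗[F] A) →ₗ[F] F :=
  T1 m a b c x - T2 m a b c x + T3 m a b c x

lemma Phi_antisym (m : A →ₗ[F] A →ₗ[F] A) (hA : IsAssocMul m)
    (a b c : Module.Dual F A) (x : A) (s t : A ⊗[F] A) :
    Phi m a b c x s t + Phi m a b c x t s = 0 := by
  have h : Phi m a b c x + (Phi m a b c x).flip = 0 := by
    ext u v u' v'
    simp only [AlgebraTensorModule.curry_apply, TensorProduct.curry_apply,
      LinearMap.coe_restrictScalars, Phi, LinearMap.add_apply, LinearMap.sub_apply, LinearMap.flip_apply,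
      T1_apply, T2_apply, T3_apply, Dop_tmul, map_sub, map_add, pair2_tmul, pair3_tmul,
      Efun_apply, t12_tmul, t13_tmul, t23_tmul, Mop_tmul, LinearMap.zero_apply,
      LinearMap.compr₂_apply, TensorProduct.mk_apply]
    simp only [show ∀ p q w, m (m p q) w = m p (m q w) from hA]
    ring
  have := LinearMap.congr_fun (LinearMap.congr_fun h s) t
  simpa using this

lemma Phi_diag (m : A →ₗ[F] A →ₗ[F] A) (hA : IsAssocMul m)
    (a b c : Module.Dual F A) (x : A) (r : A ⊗[F] A) :
    Phi m a b c x r r = 0 := by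
  induction r using TensorProduct.induction_on with
  | zero => simp
  | tmul u v =>
    simp only [Phi, LinearMap.add_apply, LinearMap.sub_apply,
      T1_apply, T2_apply, T3_apply, Dop_tmul, map_sub, map_add, pair2_tmul, pair3_tmul,
      Efun_apply, t12_tmul, t13_tmul, t23_tmul, Mop_tmul]
    simp only [show ∀ p q w, m (m p q) w = m p (m q w) from hA]
    ring
  | add s t hs ht =>
    have h1 := Phi_antisym m hA a b c x s t
    simp only [map_add, LinearMap.add_apply, hs, ht, zero_add, add_zero] at *
    -- goal should now be Phi s t + Phi t s = 0 up to arrangement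
    linear_combination h1
end Aux2

section Aux3
variable {F A : Type*} [Field F] [AddCommGroup A] [Module F A]

lemma dualDistrib_pair3 (f b c : Module.Dual F A) :
    TensorProduct.dualDistrib F A (A ⊗[F] A)
      (f ⊗ₜ (TensorProduct.dualDistrib F A A (b ⊗ₜ c))) = pair3 f b c := by
  ext u v w
  simp [TensorProduct.dualDistrib_apply, mul_assoc]

lemma pair3_separating [FiniteDimensional F A] (T : A ⊗[F] (A ⊗[F] A))
    (h : ∀ a b c : Module.Dual F A, pair3 a b c T = 0) : T = 0 := by
  rw [← Module.forall_dual_apply_eq_zero_iff F T]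
  intro φ
  obtain ⟨ξ, rfl⟩ : ∃ ξ, TensorProduct.dualDistrib F A (A ⊗[F] A) ξ = φ := by
    refine ⟨(TensorProduct.dualDistribEquiv F A (A ⊗[F] A)).symm φ, ?_⟩
    exact (TensorProduct.dualDistribEquiv F A (A ⊗[F] A)).apply_symm_apply φ
  induction ξ using TensorProduct.induction_on with
  | zero => simp
  | add ξ₁ ξ₂ h1 h2 => simp [map_add, h1, h2]
  | tmul f ψ =>
    obtain ⟨η, rfl⟩ : ∃ η, TensorProduct.dualDistrib F A A η = ψ := by
      refine ⟨(TensorProduct.dualDistribEquiv F A A).symm ψ, ?_⟩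
      exact (TensorProduct.dualDistribEquiv F A A).apply_symm_apply ψ
    induction η using TensorProduct.induction_on with
    | zero => simp
    | tmul b c => rw [dualDistrib_pair3]; exact h f b c
    | add η₁ η₂ h1 h2 =>
      rw [map_add, TensorProduct.tmul_add, map_add, LinearMap.add_apply, h1, h2, add_zero]

end Aux3



/-- for `Δ(x) = (id ⊗ L(x) − R(x) ⊗ id) r`, the dual map `Δ*`
defines an associative product on `A*` iff
`(id ⊗ id ⊗ L(x) − R(x) ⊗ id ⊗ id)(r₁₂r₁₃ + r₁₃r₂₃ − r₂₃r₁₂) = 0` for all `x`. -/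
theorem dual_assoc_iff_ayb_condition
    {F A : Type*} [Field F] [AddCommGroup A] [Module F A] [FiniteDimensional F A]
    (mA : A →ₗ[F] A →ₗ[F] A) (hA : IsAssocMul mA)
    (r : A ⊗[F] A)
    (Δ : A →ₗ[F] A ⊗[F] A)
    (hΔ : ∀ x : A, Δ x =
      TensorProduct.map (LinearMap.id : A →ₗ[F] A) (mA x) r -
      TensorProduct.map (mA.flip x) (LinearMap.id : A →ₗ[F] A) r)
    (circ : Module.Dual F A → Module.Dual F A → Module.Dual F A)
    (hcirc : ∀ (a b : Module.Dual F A) (x : A), circ a b x = pair2 a b (Δ x)) :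
    (∀ a b c : Module.Dual F A, circ (circ a b) c = circ a (circ b c)) ↔
      (∀ x : A,
        (TensorProduct.map (LinearMap.id : A →ₗ[F] A)
            (TensorProduct.map (LinearMap.id : A →ₗ[F] A) (mA x)) -
          TensorProduct.map (mA.flip x)
            (LinearMap.id : (A ⊗[F] A) →ₗ[F] (A ⊗[F] A)))
          (aybE mA r) = 0) := by
  have hD : ∀ y : A, Δ y = Dop mA y r := by
    intro y; rw [hΔ y]; simp [Dop, LinearMap.sub_apply]
  have hc : ∀ a b : Module.Dual F A, circ a b = Efun mA a b r := by
    intro a b; ext y; rw [hcirc, Efun_apply, hD]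
  have key : ∀ (a b c : Module.Dual F A) (x : A),
      circ (circ a b) c x - circ a (circ b c) x
        + pair3 a b c (Mop mA x (aybE mA r)) = 0 := by
    intro a b c x
    have h0 := Phi_diag mA hA a b c x r
    have e1 : T1 mA a b c x r r = circ (circ a b) c x := by
      rw [T1_apply, hcirc, hc a b, hD x]
    have e2 : T2 mA a b c x r r = circ a (circ b c) x := by
      rw [T2_apply, hcirc, hc b c, hD x]
    have e3 : T3 mA a b c x r r = pair3 a b c (Mop mA x (aybE mA r)) := by
      rw [T3_apply]; rfl
    simp only [Phi, LinearMap.add_apply, LinearMap.sub_apply, e1, e2, e3] at h0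
    linear_combination h0
  constructor
  · intro hassoc x
    show Mop mA x (aybE mA r) = 0
    apply pair3_separating
    intro a b c
    have k := key a b c x
    rw [hassoc a b c] at k
    linear_combination k
  · intro hzero a b c
    ext x
    have k := key a b c x
    have hz : Mop mA x (aybE mA r) = 0 := hzero x
    rw [hz, map_zero] at k
    linear_combination k
end

section
/- Let (A,·) be a finite-dimensional (nonunital) associative algebra over a field F and let r ∈ A⊗A be an antisymmetric solution of the associative Yang–Baxter equation. Let A ⋉ A* be the associative algebra on A ⊕ A* with product (x+a*)*(y+b*) = x·y + R·*(x)b* + L·*(y)a* (the semidirect product with zero product on A*), and let A ⋈ A* be the associative algebra on A ⊕ A* with products: x·y on A; a*∘b* = R·*(r(a*))b* + L·*(r(b*))a* on A*; x*a* = x·r(a*) − r(R·*(x)a*) + R·*(x)a*; and a**x = r(a*)·x − r(L·*(x)a*) + L·*(x)a*. Then the linear map φ : A ⋉ A* → A ⋈ A* defined by φ(x) = x and φ(a*) = −r(a*) + a* is an isomorphism of associative algebras, and moreover B(φ(u), φ(v)) = B(u,v) for all u,v, where B(x+a*, y+b*) = ⟨x,b*⟩ + ⟨a*,y⟩; i.e.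 the two Frobenius algebras are isomorphic. -/
open TensorProduct LinearMap

section MyAux

variable {F A : Type*} [Field F] [AddCommGroup A] [Module F A]

/-- Right contraction: on `x ⊗ y` gives `v y • x`. -/
noncomputable def contrR (v : Module.Dual F A) : A ⊗[F] A →ₗ[F] A :=
  TensorProduct.lift ((LinearMap.lsmul F A ∘ₗ v).flip)

/-- Left contraction: on `x ⊗ y` gives `v x • y`. -/
noncomputable def contrL (v : Module.Dual F A) : A ⊗[F] A →ₗ[F] A :=
  TensorProduct.lift (LinearMap.lsmul F A ∘ₗ v)

@[simp] lemma contrR_tmul (v : Module.Dual F A) (x y : A) :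
    contrR v (x ⊗ₜ[F] y) = v y • x := rfl

@[simp] lemma contrL_tmul (v : Module.Dual F A) (x y : A) :
    contrL v (x ⊗ₜ[F] y) = v x • y := rfl

@[simp] lemma contrR_zero (t : A ⊗[F] A) :
    contrR (0 : Module.Dual F A) t = 0 := by
  induction t using TensorProduct.induction_on with
  | zero => simp
  | tmul x y => simp
  | add p q hp hq => simp [hp, hq]

@[simp] lemma contrR_add (v w : Module.Dual F A) (t : A ⊗[F] A) :
    contrR (v + w) t = contrR v t + contrR w t := by
  induction t using TensorProduct.induction_on with
  | zero => simp
  | tmul x y => simp [add_smul]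
  | add p q hp hq => simp [hp, hq]; abel

lemma contrR_neg (v : Module.Dual F A) (t : A ⊗[F] A) :
    contrR (-v) t = - contrR v t := by
  induction t using TensorProduct.induction_on with
  | zero => simp
  | tmul x y => simp
  | add p q hp hq => simp [hp, hq]; abel

lemma apply_contrR (u v : Module.Dual F A) (t : A ⊗[F] A) :
    u (contrR v t) = pair2 u v t := by
  induction t using TensorProduct.induction_on with
  | zero => simp
  | tmul x y => simp [pair2]; ring
  | add p q hp hq => simp [hp, hq]

lemma contrL_comm (v : Module.Dual F A) (t : A ⊗[F] A) :
    contrL v ((TensorProduct.comm F A A) t) = contrR v t := by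
  induction t using TensorProduct.induction_on with
  | zero => simp
  | tmul x y => simp
  | add p q hp hq => simp [hp, hq]

lemma pair2_comm (u v : Module.Dual F A) (t : A ⊗[F] A) :
    pair2 u v ((TensorProduct.comm F A A) t) = pair2 v u t := by
  induction t using TensorProduct.induction_on with
  | zero => simp
  | tmul x y => simp [pair2]; ring
  | add p q hp hq => simp [hp, hq]

end MyAux

/-- the Frobenius algebra `A ⋈ A*` given by an antisymmetric
solution `r` of the associative Yang–Baxter equation is isomorphic, as a
Frobenius algebra, to the semidirect product `A ⋉ A*`, via
`φ(x + a*) = x − r(a*) + a*`. -/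
theorem frobenius_isomorphism_semidirect
    {F A : Type*} [Field F] [AddCommGroup A] [Module F A] [FiniteDimensional F A]
    (mA : A →ₗ[F] A →ₗ[F] A) (hA : IsAssocMul mA)
    (r : A ⊗[F] A)
    (hskew : (TensorProduct.comm F A A) r = -r)
    (hayb : aybE mA r = 0)
    (rmap : Module.Dual F A →ₗ[F] A)
    (hrmap : ∀ u v : Module.Dual F A, u (rmap v) = pair2 u v r)
    (Rd Ld : A →ₗ[F] Module.Dual F A →ₗ[F] Module.Dual F A)
    (hRd : ∀ (x y : A) (a : Module.Dual F A), Rd x a y = a (mA y x))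
    (hLd : ∀ (x y : A) (a : Module.Dual F A), Ld x a y = a (mA x y))
    -- the semidirect product `A ⋉ A*`
    (Msd : (A × Module.Dual F A) →ₗ[F] (A × Module.Dual F A) →ₗ[F]
      (A × Module.Dual F A))
    (hMsd : ∀ u v : A × Module.Dual F A,
      Msd u v = (mA u.1 v.1, Rd u.1 v.2 + Ld v.1 u.2))
    -- the double construction `A ⋈ A*` induced by `r`
    (Mbow : (A × Module.Dual F A) →ₗ[F] (A × Module.Dual F A) →ₗ[F]
      (A × Module.Dual F A))
    (hMbow : ∀ u v : A × Module.Dual F A,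
      Mbow u v =
        (mA u.1 v.1 + (mA u.1 (rmap v.2) - rmap (Rd u.1 v.2)) +
          (mA (rmap u.2) v.1 - rmap (Ld v.1 u.2)),
         (Rd (rmap u.2) v.2 + Ld (rmap v.2) u.2) + Rd u.1 v.2 + Ld v.1 u.2))
    -- the map `φ(x + a*) = x − r(a*) + a*`
    (φ : (A × Module.Dual F A) →ₗ[F] (A × Module.Dual F A))
    (hφ : ∀ u : A × Module.Dual F A, φ u = (u.1 - rmap u.2, u.2)) :
    Function.Bijective φ ∧
    (∀ u v : A × Module.Dual F A, φ (Msd u v) = Mbow (φ u) (φ v)) ∧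
    (∀ u v : A × Module.Dual F A,
      (φ v).2 (φ u).1 + (φ u).2 (φ v).1 = v.2 u.1 + u.2 v.1) := by
  have hrc : ∀ v, rmap v = contrR v r := by
    intro v
    rw [← sub_eq_zero, ← Module.forall_dual_apply_eq_zero_iff F]
    intro u
    simp [map_sub, hrmap, apply_contrR]
  have hanti : ∀ v : Module.Dual F A, contrL v r = - contrR v r := by
    intro v
    have h1 := contrL_comm v r
    rw [hskew, map_neg] at h1
    exact neg_eq_iff_eq_neg.mp h1
  have hsp : ∀ u v : Module.Dual F A, v (rmap u) = - (u (rmap v)) := by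
    intro u v
    have h1 := pair2_comm u v r
    rw [hskew, map_neg] at h1
    rw [hrmap, hrmap, ← h1]
  have key : ∀ a b : Module.Dual F A,
      mA (rmap a) (rmap b) = rmap (Rd (rmap a) b) + rmap (Ld (rmap b) a) := by
    intro a b
    rw [← sub_eq_zero, ← Module.forall_dual_apply_eq_zero_iff F]
    intro c
    set T3 : A ⊗[F] (A ⊗[F] A) →ₗ[F] F :=
      (TensorProduct.lid F F).toLinearMap ∘ₗ TensorProduct.map c
        ((TensorProduct.lid F F).toLinearMap ∘ₗ TensorProduct.map a b) with hT3
    have h1 : ∀ p q : A ⊗[F] A,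
        c (mA (contrR a p) (contrR b q)) + c (contrR (Rd (contrL a q) b) p)
          - c (contrR (Ld (contrR b p) a) q)
        = T3 (t12 mA (p ⊗ₜ q)) + T3 (t13 mA (p ⊗ₜ q)) - T3 (t23 mA (p ⊗ₜ q)) := by
      intro p q
      induction p using TensorProduct.induction_on with
      | zero => simp
      | tmul x y =>
        induction q using TensorProduct.induction_on with
        | zero => simp
        | tmul x' y' =>
          simp [t12, t13, t23, hT3, hRd, hLd, TensorProduct.smul_tmul']
          ring
        | add q1 q2 hq1 hq2 =>
          simp only [tmul_add, map_add, LinearMap.add_apply, contrR_add] at hq1 hq2 ⊢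
          linear_combination hq1 + hq2
      | add p1 p2 hp1 hp2 =>
        simp only [add_tmul, map_add, LinearMap.add_apply, contrR_add] at hp1 hp2 ⊢
        linear_combination hp1 + hp2
    have h0 : T3 (t12 mA (r ⊗ₜ r)) + T3 (t13 mA (r ⊗ₜ r)) - T3 (t23 mA (r ⊗ₜ r)) = 0 := by
      have h := congrArg T3 hayb
      simpa [aybE, map_add, map_sub] using h
    have h3 := (h1 r r).trans h0
    rw [hanti a] at h3
    simp only [map_neg, LinearMap.neg_apply, contrR_neg] at h3
    simp only [map_sub, map_add, hrc]
    linear_combination h3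
  refine ⟨?_, ?_, ?_⟩
  · rw [Function.bijective_iff_has_inverse]
    refine ⟨fun u => (u.1 + rmap u.2, u.2), fun u => ?_, fun u => ?_⟩
    · simp [hφ]
    · simp [hφ]
  · intro u v
    rw [hMsd, hφ, hMbow, hφ u, hφ v]
    rw [Prod.mk.injEq]
    constructor
    · simp only [map_sub, map_add, LinearMap.sub_apply, LinearMap.add_apply]
      rw [key u.2 v.2]
      abel
    · simp only [map_sub, LinearMap.sub_apply]
      abel
  · intro u v
    simp only [hφ, map_sub]
    linear_combination -hsp u.2 v.2
end
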